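/- Let $n, N \ge 1$, $1 < q < \infty$, $M, \tau > 0$, $K > M$ and $C > 0$. Let $(A_s)_{s > 0}$ be a family of bounded linear operators on $L^q(\mathbb{R}^n, \mathbb{C}^N)$ such that $s \mapsto A_s u$ is strongly measurable for each $u$, and such that for all $s > 0$, all Borel sets $E, F \subseteq \mathbb{R}^n$ and all $u \in L^q$: $\|\chi_F A_s(\chi_E u)\|_{L^q} \le C \left(1 + \frac{d(E,F)}{s}\right)^{-K} \|\chi_E u\|_{L^q}$. Let $t \ge r > 0$ and let $m : (0,\infty) \to \mathbb{C}$ be measurable with $|m(s)| \le \min\!\left(\left(\frac{r}{s}\right)^M, 1\right) \cdot \min\!\left(1, \left(\frac{s}{t}\right)^\tau\right)$ for all $s > 0$. Then for every $u \in L^q$ the Bochner integral $T u := \int_0^\infty m(s)\, A_s u\, \frac{ds}{s}$ converges in $L^q$, and there is a constant $C'$ depending only on $M, \tau, K, C$ such that for all Borel sets $E, F \subseteq \mathbb{R}^n$ and all $u \in L^q$: $\|\chi_F T(\chi_E u)\|_{L^q} \le C' \left(1 + \frac{d(E,F)}{r}\right)^{-M} \|\chi_E u\|_{L^q}$. -/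

import Mathlib

/-!
By the off-diagonal estimate for `A_s`, everything reduces to the scalar integral
`∫₀^∞ min((r/s)^M, 1) min(1, (s/t)^τ) (1 + d/s)^{-K} ds/s` with `d = d(E,F)`, split at `s = r`
and `s = r + d`. On `(0, r]` the factor `(s/t)^τ ≤ (s/r)^τ` gives `(1 + d/r)^{-M}/τ`; on
`(r, r + d]` the bound `(1 + d/s)^{-K} ≤ (s/(r + d))^K` and `K > M` give
`(1 + d/r)^{-M}/(K - M)`; on `(r + d, ∞)` the decay `(r/s)^M` gives `(1 + d/r)^{-M}/M`.
Integrability of `s ↦ m(s) A_s u / s` is the same estimate with `E = F = univ`.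
-/

open MeasureTheory ENNReal

/-- The distance `d(E,F) = inf {dist x y | x ∈ E, y ∈ F}` between two sets. -/
noncomputable def setDist {α : Type*} [PseudoMetricSpace α] (E F : Set α) : ℝ :=
  sInf (Set.image2 dist E F)

/-- Multiplication of an element of `L^p` by the indicator function of a measurable set. -/
noncomputable def indLp {α : Type*} [MeasurableSpace α] {μ : Measure α}
    {E : Type*} [NormedAddCommGroup E] {p : ℝ≥0∞}
    {S : Set α} (hS : MeasurableSet S) (u : Lp E p μ) : Lp E p μ :=
  MeasureTheory.MemLp.toLp (S.indicator u) ((MeasureTheory.Lp.memLp u).indicator hS)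

open Set

lemma setDist_nonneg {α : Type*} [PseudoMetricSpace α] (E F : Set α) : 0 ≤ setDist E F :=
  Real.sInf_nonneg <| forall_mem_image2.2 fun _ _ _ _ => dist_nonneg

section IndicatorLp

variable {X : Type*} [MeasurableSpace X] {μ : Measure X} {V : Type*} [NormedAddCommGroup V]
  {p : ℝ≥0∞} {S : Set X}

lemma norm_indLp_le (hS : MeasurableSet S) (u : Lp V p μ) : ‖indLp hS u‖ ≤ ‖u‖ := by
  rw [indLp, Lp.norm_toLp, Lp.norm_def]
  exact toReal_mono (Lp.eLpNorm_ne_top u) (eLpNorm_indicator_le _)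

@[simp] lemma indLp_univ (u : Lp V p μ) : indLp MeasurableSet.univ u = u := by
  simp only [indLp, indicator_univ, Lp.toLp_coeFn]

variable {𝕜 : Type*} [NormedField 𝕜] [NormedSpace 𝕜 V] [Fact (1 ≤ p)]

noncomputable def indLpCLM (hS : MeasurableSet S) : Lp V p μ →L[𝕜] Lp V p μ :=
  LinearMap.mkContinuous
    { toFun := indLp hS
      map_add' := fun u v => by
        simp only [indLp, ← MemLp.toLp_add]
        refine MemLp.toLp_congr _ _ ?_
        exact (Lp.coeFn_add u v).indicator.trans (.of_eq (indicator_add' S _ _))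
      map_smul' := fun c u => by
        simp only [indLp, RingHom.id_apply, ← MemLp.toLp_const_smul]
        refine MemLp.toLp_congr _ _ ?_
        exact (Lp.coeFn_smul c u).indicator.trans (.of_eq (indicator_const_smul S c _)) }
    1 fun u => by simpa using norm_indLp_le hS u

@[simp] lemma indLpCLM_apply (hS : MeasurableSet S) (u : Lp V p μ) :
    indLpCLM (𝕜 := 𝕜) hS u = indLp hS u := rfl

end IndicatorLp

lemma setIntegral_Ioi_eq_Ioc_add_Ioi {μ : Measure ℝ} {f : ℝ → ℝ} {a b : ℝ} (hab : a ≤ b)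
    (hf : IntegrableOn f (Ioi a) μ) :
    ∫ x in Ioi a, f x ∂μ = ∫ x in Ioc a b, f x ∂μ + ∫ x in Ioi b, f x ∂μ := by
  rw [← Ioc_union_Ioi_eq_Ioi hab] at hf ⊢
  exact setIntegral_union Ioc_disjoint_Ioi_same measurableSet_Ioi (hf.mono_set subset_union_left)
    (hf.mono_set subset_union_right)

/-- `C` times this bounds `‖χ_F (m(s)/s) A_s χ_E‖` for `d = d(E,F)`; `1/s` comes from `ds/s`. -/
noncomputable def offDiagKernel (M τ K r t d s : ℝ) : ℝ :=
  min ((r / s) ^ M) 1 * min 1 ((s / t) ^ τ) * (1 + d / s) ^ (-K) / s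

section OffDiagKernel

variable {M τ K r t d s : ℝ}

lemma offDiagKernel_nonneg (hr : 0 ≤ r) (ht : 0 ≤ t) (hd : 0 ≤ d) (hs : 0 < s) :
    0 ≤ offDiagKernel M τ K r t d s := by
  unfold offDiagKernel
  have := Real.rpow_nonneg (div_nonneg hr hs.le) M
  have := Real.rpow_nonneg (div_nonneg hs.le ht) τ
  have := Real.rpow_nonneg (by positivity : 0 ≤ 1 + d / s) (-K)
  positivity

lemma measurable_offDiagKernel : Measurable (offDiagKernel M τ K r t d) := by
  unfold offDiagKernel
  fun_prop

lemma one_add_div_rpow_neg (hr : 0 < r) (hd : 0 ≤ d) (a : ℝ) :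
    (1 + d / r) ^ (-a) = r ^ a * (r + d) ^ (-a) := by
  rw [show 1 + d / r = (r + d) / r by field_simp, Real.div_rpow (by positivity) hr.le,
    Real.rpow_neg (by positivity), Real.rpow_neg (by positivity), div_inv_eq_mul, mul_comm]

lemma offDiagKernel_le_of_le (hτ : 0 ≤ τ) (hM : 0 ≤ M) (hMK : M ≤ K) (hd : 0 ≤ d)
    (hrt : r ≤ t) (hs : 0 < s) (hsr : s ≤ r) :
    offDiagKernel M τ K r t d s ≤ r ^ M * (r + d) ^ (-M) * r ^ (-τ) * s ^ (τ - 1) := by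
  have hr : 0 < r := hs.trans_le hsr
  have h₁ : min ((r / s) ^ M) 1 ≤ 1 := min_le_right _ _
  have h₂ : min 1 ((s / t) ^ τ) ≤ (s / r) ^ τ :=
    (min_le_right _ _).trans (Real.rpow_le_rpow (div_nonneg hs.le (hr.le.trans hrt))
      (div_le_div_of_nonneg_left hs.le hr hrt) hτ)
  have h₃ : (1 + d / s) ^ (-K) ≤ (1 + d / r) ^ (-M) := calc
    (1 + d / s) ^ (-K) ≤ (1 + d / r) ^ (-K) :=
      Real.rpow_le_rpow_of_nonpos (by positivity) (by gcongr) (by linarith)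
    _ ≤ (1 + d / r) ^ (-M) :=
      Real.rpow_le_rpow_of_exponent_le (by simpa using div_nonneg hd hr.le) (by linarith)
  calc offDiagKernel M τ K r t d s ≤ 1 * (s / r) ^ τ * (1 + d / r) ^ (-M) / s := by
        unfold offDiagKernel
        have := Real.rpow_nonneg (by positivity : 0 ≤ 1 + d / s) (-K)
        gcongr
        exact le_min zero_le_one (Real.rpow_nonneg (div_nonneg hs.le (hr.le.trans hrt)) _)
    _ = r ^ M * (r + d) ^ (-M) * r ^ (-τ) * s ^ (τ - 1) := by
        rw [one_add_div_rpow_neg hr hd, Real.div_rpow hs.le hr.le, Real.rpow_sub_one hs.ne',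
          Real.rpow_neg hr.le]
        field_simp

lemma offDiagKernel_le_of_lt (hK : 0 ≤ K) (hd : 0 ≤ d) (hr : 0 < r) (ht : 0 ≤ t)
    (hrs : r < s) :
    offDiagKernel M τ K r t d s ≤ r ^ M * (r + d) ^ (-K) * s ^ (K - M - 1) := by
  have hs : 0 < s := hr.trans hrs
  have h₁ : min ((r / s) ^ M) 1 ≤ (r / s) ^ M := min_le_left _ _
  have h₂ : min 1 ((s / t) ^ τ) ≤ 1 := min_le_left _ _
  have h₃ : (1 + d / s) ^ (-K) ≤ (s / (r + d)) ^ K := calc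
    (1 + d / s) ^ (-K) = (s / (s + d)) ^ K := by
      rw [show 1 + d / s = (s + d) / s by field_simp, Real.rpow_neg (by positivity),
        ← Real.inv_rpow (by positivity), inv_div]
    _ ≤ (s / (r + d)) ^ K := by gcongr
  calc offDiagKernel M τ K r t d s ≤ (r / s) ^ M * 1 * (s / (r + d)) ^ K / s := by
        unfold offDiagKernel
        have := Real.rpow_nonneg (by positivity : 0 ≤ 1 + d / s) (-K)
        have := Real.rpow_nonneg (div_nonneg hr.le hs.le) M
        gcongr
    _ = r ^ M * (r + d) ^ (-K) * s ^ (K - M - 1) := by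
        rw [Real.div_rpow hr.le hs.le, Real.div_rpow hs.le (by positivity),
          Real.rpow_neg (by positivity), Real.rpow_sub_one hs.ne', Real.rpow_sub hs]
        field_simp

lemma offDiagKernel_le (hK : 0 ≤ K) (hd : 0 ≤ d) (hr : 0 < r) (ht : 0 ≤ t) (hs₀ : 0 < s) :
    offDiagKernel M τ K r t d s ≤ r ^ M * s ^ (-M - 1) := by
  have h₁ : min ((r / s) ^ M) 1 ≤ (r / s) ^ M := min_le_left _ _
  have h₂ : min 1 ((s / t) ^ τ) ≤ 1 := min_le_left _ _
  have h₃ : (1 + d / s) ^ (-K) ≤ 1 :=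
    Real.rpow_le_one_of_one_le_of_nonpos (by simpa using div_nonneg hd hs₀.le) (by linarith)
  calc offDiagKernel M τ K r t d s ≤ (r / s) ^ M * 1 * 1 / s := by
        unfold offDiagKernel
        have := Real.rpow_nonneg (by positivity : 0 ≤ 1 + d / s) (-K)
        have := Real.rpow_nonneg (div_nonneg hr.le hs₀.le) M
        gcongr
    _ = r ^ M * s ^ (-M - 1) := by
        rw [Real.div_rpow hr.le hs₀.le, Real.rpow_sub_one hs₀.ne', Real.rpow_neg hs₀.le]
        field_simp

lemma integrableOn_offDiagKernel (hM : 0 < M) (hτ : 0 < τ) (hMK : M ≤ K) (hd : 0 ≤ d)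
    (hr : 0 < r) (hrt : r ≤ t) :
    IntegrableOn (offDiagKernel M τ K r t d) (Ioi 0) := by
  have hK : 0 ≤ K := hM.le.trans hMK
  have ht : 0 ≤ t := hr.le.trans hrt
  have hnonneg : ∀ S, MeasurableSet S → S ⊆ Ioi 0 →
      ∀ᵐ s ∂volume.restrict S, 0 ≤ offDiagKernel M τ K r t d s := fun S hSm hS =>
    ae_restrict_of_forall_mem hSm fun s hs => offDiagKernel_nonneg hr.le ht hd (hS hs)
  have h₁ : IntegrableOn (offDiagKernel M τ K r t d) (Ioc 0 r) :=
    Integrable.mono_nonneg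
      ((intervalIntegral.intervalIntegrable_rpow' (by linarith)).1.const_mul _)
      measurable_offDiagKernel.aestronglyMeasurable (hnonneg _ measurableSet_Ioc fun _ hs => hs.1)
      (ae_restrict_of_forall_mem measurableSet_Ioc fun s hs =>
        offDiagKernel_le_of_le hτ.le hM.le hMK hd hrt hs.1 hs.2)
  have h₂ : IntegrableOn (offDiagKernel M τ K r t d) (Ioi r) :=
    Integrable.mono_nonneg ((integrableOn_Ioi_rpow_of_lt (by linarith) hr).const_mul _)
      measurable_offDiagKernel.aestronglyMeasurable
      (hnonneg _ measurableSet_Ioi fun _ hs => hr.trans hs)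
      (ae_restrict_of_forall_mem measurableSet_Ioi fun s hs =>
        offDiagKernel_le hK hd hr ht (hr.trans hs))
  rw [← Ioc_union_Ioi_eq_Ioi hr.le]
  exact h₁.union h₂

lemma setIntegral_Ioc_zero_offDiagKernel_le (hM : 0 < M) (hτ : 0 < τ) (hMK : M ≤ K)
    (hd : 0 ≤ d) (hr : 0 < r) (hrt : r ≤ t) :
    ∫ s in Ioc 0 r, offDiagKernel M τ K r t d s ≤ r ^ M * (r + d) ^ (-M) / τ := calc
  _ ≤ ∫ s in Ioc 0 r, r ^ M * (r + d) ^ (-M) * r ^ (-τ) * s ^ (τ - 1) :=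
    setIntegral_mono_of_nonneg (fun s hs => offDiagKernel_nonneg hr.le (hr.le.trans hrt) hd hs.1)
      (fun s hs => offDiagKernel_le_of_le hτ.le hM.le hMK hd hrt hs.1 hs.2)
      ((intervalIntegral.intervalIntegrable_rpow' (by linarith)).1.const_mul _)
  _ = r ^ M * (r + d) ^ (-M) / τ := by
    rw [integral_const_mul, ← intervalIntegral.integral_of_le hr.le,
      integral_rpow (Or.inl (by linarith)), sub_add_cancel,
      Real.zero_rpow hτ.ne', sub_zero, Real.rpow_neg hr.le]
    field_simp

lemma setIntegral_Ioc_offDiagKernel_le (hM : 0 ≤ M) (hMK : M < K) (hd : 0 ≤ d) (hr : 0 < r)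
    (ht : 0 ≤ t) :
    ∫ s in Ioc r (r + d), offDiagKernel M τ K r t d s ≤ r ^ M * (r + d) ^ (-M) / (K - M) := by
  have hrd : 0 < r + d := by linarith
  calc _ ≤ ∫ s in Ioc r (r + d), r ^ M * (r + d) ^ (-K) * s ^ (K - M - 1) :=
      setIntegral_mono_of_nonneg (fun s hs => offDiagKernel_nonneg hr.le ht hd (hr.trans hs.1))
        (fun s hs => offDiagKernel_le_of_lt (hM.trans hMK.le) hd hr ht hs.1)
        ((intervalIntegral.intervalIntegrable_rpow' (by linarith)).1.const_mul _)
    _ = r ^ M * (r + d) ^ (-K) * (((r + d) ^ (K - M) - r ^ (K - M)) / (K - M)) := by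
      rw [integral_const_mul, ← intervalIntegral.integral_of_le (by linarith),
        integral_rpow (Or.inl (by linarith)), sub_add_cancel]
    _ ≤ r ^ M * (r + d) ^ (-K) * ((r + d) ^ (K - M) / (K - M)) := by
      have := Real.rpow_nonneg hr.le (K - M)
      have := sub_pos.2 hMK
      gcongr
      linarith
    _ = r ^ M * (r + d) ^ (-M) / (K - M) := by
      rw [Real.rpow_sub hrd, Real.rpow_neg hrd.le, Real.rpow_neg hrd.le]
      field_simp

lemma setIntegral_Ioi_offDiagKernel_le (hM : 0 < M) (hK : 0 ≤ K) (hd : 0 ≤ d) (hr : 0 < r)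
    (ht : 0 ≤ t) :
    ∫ s in Ioi (r + d), offDiagKernel M τ K r t d s ≤ r ^ M * (r + d) ^ (-M) / M := by
  have hrd : 0 < r + d := by linarith
  calc _ ≤ ∫ s in Ioi (r + d), r ^ M * s ^ (-M - 1) :=
      setIntegral_mono_of_nonneg (fun s hs => offDiagKernel_nonneg hr.le ht hd (hrd.trans hs))
        (fun s hs => offDiagKernel_le hK hd hr ht (hrd.trans hs))
        ((integrableOn_Ioi_rpow_of_lt (by linarith) hrd).const_mul _)
    _ = r ^ M * (r + d) ^ (-M) / M := by
      rw [integral_const_mul, integral_Ioi_rpow_of_lt (by linarith) hrd, sub_add_cancel]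
      field_simp

lemma setIntegral_offDiagKernel_le (hM : 0 < M) (hτ : 0 < τ) (hMK : M < K) (hd : 0 ≤ d)
    (hr : 0 < r) (hrt : r ≤ t) :
    ∫ s in Ioi 0, offDiagKernel M τ K r t d s ≤
      (1 / τ + 1 / (K - M) + 1 / M) * (1 + d / r) ^ (-M) := by
  have ht : 0 ≤ t := hr.le.trans hrt
  have hk := integrableOn_offDiagKernel hM hτ hMK.le hd hr hrt
  rw [setIntegral_Ioi_eq_Ioc_add_Ioi hr.le hk,
    setIntegral_Ioi_eq_Ioc_add_Ioi (b := r + d) (by linarith) (hk.mono_set (Ioi_subset_Ioi hr.le)),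
    one_add_div_rpow_neg hr hd]
  calc _ ≤ r ^ M * (r + d) ^ (-M) / τ +
        (r ^ M * (r + d) ^ (-M) / (K - M) + r ^ M * (r + d) ^ (-M) / M) :=
      add_le_add (setIntegral_Ioc_zero_offDiagKernel_le hM hτ hMK.le hd hr hrt)
        (add_le_add (setIntegral_Ioc_offDiagKernel_le hM.le hMK hd hr ht)
          (setIntegral_Ioi_offDiagKernel_le hM (hM.le.trans hMK.le) hd hr ht))
    _ = _ := by ring

end OffDiagKernel

section OffDiagonal

variable {X : Type*} [PseudoMetricSpace X] [MeasurableSpace X] {μ : Measure X}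
  {V : Type*} [NormedAddCommGroup V] [NormedSpace ℂ V] {p : ℝ≥0∞} [Fact (1 ≤ p)]

def HasOffDiagEstimates (T : Lp V p μ →L[ℂ] Lp V p μ) (C K s : ℝ) : Prop :=
  ∀ (E F : Set X) (hE : MeasurableSet E) (hF : MeasurableSet F) (u : Lp V p μ),
    ‖indLp hF (T (indLp hE u))‖ ≤ C * (1 + setDist E F / s) ^ (-K) * ‖indLp hE u‖

lemma HasOffDiagEstimates.norm_indLp_smul_le {T : Lp V p μ →L[ℂ] Lp V p μ}
    {C K s M τ r t : ℝ} (hT : HasOffDiagEstimates T C K s) (hs : 0 < s) {c : ℂ}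
    (hc : ‖c‖ ≤ min ((r / s) ^ M) 1 * min 1 ((s / t) ^ τ)) {E F : Set X}
    (hE : MeasurableSet E) (hF : MeasurableSet F) (u : Lp V p μ) :
    ‖indLp hF ((c / (s : ℂ)) • T (indLp hE u))‖ ≤
      C * ‖indLp hE u‖ * offDiagKernel M τ K r t (setDist E F) s := by
  rw [← indLpCLM_apply (𝕜 := ℂ), map_smul, norm_smul, norm_div, Complex.norm_real,
    Real.norm_of_nonneg hs.le, indLpCLM_apply]
  calc ‖c‖ / s * ‖indLp hF (T (indLp hE u))‖
      ≤ min ((r / s) ^ M) 1 * min 1 ((s / t) ^ τ) / s *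
          (C * (1 + setDist E F / s) ^ (-K) * ‖indLp hE u‖) :=
        mul_le_mul (by gcongr) (hT E F hE hF u) (norm_nonneg _)
          (div_nonneg ((norm_nonneg c).trans hc) hs.le)
    _ = C * ‖indLp hE u‖ * offDiagKernel M τ K r t (setDist E F) s := by
        rw [offDiagKernel]; ring

variable {A : ℝ → Lp V p μ →L[ℂ] Lp V p μ} {m : ℝ → ℂ} {C K M τ r t : ℝ}

theorem integrable_smul_of_hasOffDiagEstimates (hM : 0 < M) (hτ : 0 < τ) (hMK : M ≤ K)
    (hr : 0 < r) (hrt : r ≤ t) (hA : ∀ s, 0 < s → HasOffDiagEstimates (A s) C K s)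
    (hAm : ∀ u, AEStronglyMeasurable (fun s => A s u) (volume.restrict (Ioi 0)))
    (hm : Measurable m) (hmb : ∀ s, 0 < s → ‖m s‖ ≤ min ((r / s) ^ M) 1 * min 1 ((s / t) ^ τ))
    (u : Lp V p μ) :
    Integrable (fun s => (m s / (s : ℂ)) • A s u) (volume.restrict (Ioi 0)) := by
  refine Integrable.mono'
    ((integrableOn_offDiagKernel hM hτ hMK (setDist_nonneg (univ : Set X) univ) hr hrt).const_mul
      (C * ‖u‖))
    ((hm.div Complex.measurable_ofReal).aestronglyMeasurable.smul (hAm u))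
    (ae_restrict_of_forall_mem measurableSet_Ioi fun s hs => ?_)
  simpa using (hA s hs).norm_indLp_smul_le hs (hmb s hs) MeasurableSet.univ MeasurableSet.univ u

theorem norm_indLp_integral_smul_le [CompleteSpace V] (hM : 0 < M) (hτ : 0 < τ) (hMK : M < K)
    (hC : 0 ≤ C) (hr : 0 < r) (hrt : r ≤ t) (hA : ∀ s, 0 < s → HasOffDiagEstimates (A s) C K s)
    (hAm : ∀ u, AEStronglyMeasurable (fun s => A s u) (volume.restrict (Ioi 0)))
    (hm : Measurable m) (hmb : ∀ s, 0 < s → ‖m s‖ ≤ min ((r / s) ^ M) 1 * min 1 ((s / t) ^ τ))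
    {E F : Set X} (hE : MeasurableSet E) (hF : MeasurableSet F) (u : Lp V p μ) :
    ‖indLp hF (∫ s in Ioi 0, (m s / (s : ℂ)) • A s (indLp hE u))‖ ≤
      C * (1 / τ + 1 / (K - M) + 1 / M) * (1 + setDist E F / r) ^ (-M) * ‖indLp hE u‖ := by
  set v := indLp hE u
  have hd := setDist_nonneg E F
  calc ‖indLp hF (∫ s in Ioi 0, (m s / (s : ℂ)) • A s v)‖
      = ‖∫ s in Ioi 0, indLp hF ((m s / (s : ℂ)) • A s v)‖ := by
        rw [← indLpCLM_apply (𝕜 := ℂ), ← (indLpCLM (𝕜 := ℂ) hF).integral_comp_comm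
          (integrable_smul_of_hasOffDiagEstimates hM hτ hMK.le hr hrt hA hAm hm hmb v)]
        rfl
    _ ≤ ∫ s in Ioi 0, C * ‖v‖ * offDiagKernel M τ K r t (setDist E F) s :=
        norm_integral_le_of_norm_le
          ((integrableOn_offDiagKernel hM hτ hMK.le hd hr hrt).const_mul _)
          (ae_restrict_of_forall_mem measurableSet_Ioi fun s hs =>
            (hA s hs).norm_indLp_smul_le hs (hmb s hs) hE hF u)
    _ = C * ‖v‖ * ∫ s in Ioi 0, offDiagKernel M τ K r t (setDist E F) s := integral_const_mul _ _
    _ ≤ C * ‖v‖ * ((1 / τ + 1 / (K - M) + 1 / M) * (1 + setDist E F / r) ^ (-M)) := by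
        gcongr
        exact setIntegral_offDiagKernel_le hM hτ hMK hd hr hrt
    _ = C * (1 / τ + 1 / (K - M) + 1 / M) * (1 + setDist E F / r) ^ (-M) * ‖v‖ := by ring

end OffDiagonal

/-- Abstract form of Claim 3.9: if a strongly measurable family `(A_s)_{s>0}`
of bounded operators on `L^q(ℝ^n, ℂ^N)` satisfies off-diagonal estimates
`‖χ_F A_s (χ_E u)‖ ≤ C (1 + d(E,F)/s)^{-K}‖χ_E u‖` of order `K > M`, and
`|m(s)| ≤ min((r/s)^M, 1) · min(1, (s/t)^τ)` with `t ≥ r > 0`, `τ > 0`, then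
`T u = ∫₀^∞ m(s) A_s u ds/s` converges in `L^q` and satisfies
`‖χ_F T (χ_E u)‖ ≤ C' (1 + d(E,F)/r)^{-M} ‖χ_E u‖` with `C'` depending only on `M, τ, K, C`. -/
theorem stmt10 (M τ K C : ℝ) (hM : 0 < M) (hτ : 0 < τ) (hK : M < K) (hC : 0 < C) :
    ∃ C' : ℝ, 0 < C' ∧
      ∀ (n N : ℕ), 1 ≤ n → 1 ≤ N → ∀ (q : ℝ≥0∞) [Fact (1 ≤ q)], 1 < q → q ≠ ⊤ →
      ∀ (A : ℝ →
        (Lp (EuclideanSpace ℂ (Fin N)) q (volume : Measure (EuclideanSpace ℝ (Fin n))) →L[ℂ]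
          Lp (EuclideanSpace ℂ (Fin N)) q (volume : Measure (EuclideanSpace ℝ (Fin n))))),
      (∀ u, AEStronglyMeasurable (fun s => A s u) (volume.restrict (Set.Ioi (0 : ℝ)))) →
      (∀ s : ℝ, 0 < s → ∀ (E F : Set (EuclideanSpace ℝ (Fin n)))
          (hE : MeasurableSet E) (hF : MeasurableSet F), ∀ u,
        ‖indLp hF (A s (indLp hE u))‖ ≤ C * (1 + setDist E F / s) ^ (-K) * ‖indLp hE u‖) →
      ∀ (t r : ℝ), 0 < r → r ≤ t → ∀ (m : ℝ → ℂ), Measurable m →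
      (∀ s : ℝ, 0 < s → ‖m s‖ ≤ min ((r / s) ^ M) 1 * min 1 ((s / t) ^ τ)) →
      (∀ u, Integrable (fun s => (m s / (s : ℂ)) • A s u)
          (volume.restrict (Set.Ioi (0 : ℝ)))) ∧
      ∀ (E F : Set (EuclideanSpace ℝ (Fin n)))
          (hE : MeasurableSet E) (hF : MeasurableSet F), ∀ u,
        ‖indLp hF (∫ s in Set.Ioi (0 : ℝ), (m s / (s : ℂ)) • A s (indLp hE u))‖ ≤
          C' * (1 + setDist E F / r) ^ (-M) * ‖indLp hE u‖ := by
  have hKM : 0 < K - M := sub_pos.2 hK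
  refine ⟨C * (1 / τ + 1 / (K - M) + 1 / M), by positivity, ?_⟩
  intro n N _ _ q _ _ _ A hAm hA t r hr hrt m hm hmb
  exact ⟨integrable_smul_of_hasOffDiagEstimates hM hτ hK.le hr hrt hA hAm hm hmb,
    fun E F hE hF => norm_indLp_integral_smul_le hM hτ hK hC.le hr hrt hA hAm hm hmb hE hF⟩
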